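/- Let X¹ = (X¹₁,…,X¹_d) be a strict row contraction of n₁×n₁ complex matrices and let X² = (X²₁,…,X²_d) be a row co-isometry of n₂×n₂ complex matrices such that the unital subalgebra of M_{n₂}(ℂ) generated by X²₁,…,X²_d is all of M_{n₂}(ℂ). Then the spectral radius of T = Σᵢ₌₁^d conj(X¹ᵢ) ⊗ X²ᵢ ∈ M_{n₁n₂}(ℂ) is strictly less than 1. -/

import Mathlib

/-!
Common definitions: the ψ-involution, `vec`, the elementary Pick matrix, the Choi matrix,
Kronecker-product helpers with right-associated index types, the boomerang matrices, the
commutation matrix, and the Moore–Penrose predicate.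
-/

open Matrix Filter
open scoped Kronecker Matrix.Norms.L2Operator ComplexOrder

noncomputable section

/-- Square `n × n` complex matrices. -/
abbrev Mat (n : ℕ) := Matrix (Fin n) (Fin n) ℂ

/-- Entrywise complex conjugate of a matrix. -/
def conjM {m k : Type*} (A : Matrix m k ℂ) : Matrix m k ℂ := A.map (starRingEnd ℂ)

/-- `vec A` stacks the columns of `A`: the slot `(j, i)` (column `j`, row `i`) holds `A i j`. -/
def vecM (n : ℕ) (A : Mat n) : Matrix (Fin n × Fin n) Unit ℂ := Matrix.of fun p _ => A p.2 p.1

/-- The `ψ`-involution on `M_{n²}(ℂ)`: the linear map determined on matrix units by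
`ψ(E_{ij} ⊗ E_{kℓ}) = E_{ℓj} ⊗ E_{ki}`, equivalently `ψ(A ⊗ B) = vec(B)·vec(A)ᵀ`. -/
def psi (n : ℕ) (U : Matrix (Fin n × Fin n) (Fin n × Fin n) ℂ) :
    Matrix (Fin n × Fin n) (Fin n × Fin n) ℂ :=
  Matrix.of fun p q => U (q.2, p.2) (q.1, p.1)

/-- `X` is a strict row contraction: `‖Σᵢ Xᵢ Xᵢ*‖ < 1` in the L² operator norm. -/
def StrictRowContraction {n : ℕ} {ι : Type*} [Fintype ι] (X : ι → Mat n) : Prop :=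
  ‖∑ i, X i * (X i)ᴴ‖ < 1

/-- The elementary Pick matrix `P_X = ψ((I_{n²} − Σᵢ conj(Xᵢ) ⊗ Xᵢ)⁻¹)`. -/
def pick {n : ℕ} {ι : Type*} [Fintype ι] (X : ι → Mat n) :
    Matrix (Fin n × Fin n) (Fin n × Fin n) ℂ :=
  psi n ((1 - ∑ i, conjM (X i) ⊗ₖ X i)⁻¹)

/-- The Choi matrix `𝔠_n = Σ_{i,j} E_{ij} ⊗ E_{ij} ∈ M_{n²}(ℂ)`. -/
def choiM (n : ℕ) : Matrix (Fin n × Fin n) (Fin n × Fin n) ℂ :=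
  ∑ i : Fin n, ∑ j : Fin n, Matrix.single i j (1 : ℂ) ⊗ₖ Matrix.single i j (1 : ℂ)

/-- `X^w = X_{i₁} ⋯ X_{i_k}` for a word `w = i₁⋯i_k` in the free monoid. -/
def wordProd {n : ℕ} {ι : Type*} (X : ι → Mat n) (w : List ι) : Mat n := (w.map X).prod

/-- Kronecker product `A ⊗ C` where `A` carries a product index, with the resulting
index types flattened right-associatively (`(a × b) × c ↦ a × (b × c)`). -/
def krA {a b c a' b' c' : Type*} (A : Matrix (a × b) (a' × b') ℂ) (C : Matrix c c' ℂ) :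
    Matrix (a × b × c) (a' × b' × c') ℂ :=
  Matrix.of fun p q => A (p.1, p.2.1) (q.1, q.2.1) * C p.2.2 q.2.2

/-- Kronecker product `M ⊗ C` where `M` carries a triple product index, flattened
right-associatively. -/
def krT {a b c e a' b' c' e' : Type*} (M : Matrix (a × b × c) (a' × b' × c') ℂ)
    (C : Matrix e e' ℂ) : Matrix (a × b × c × e) (a' × b' × c' × e') ℂ :=
  Matrix.of fun p q => M (p.1, p.2.1, p.2.2.1) (q.1, q.2.1, q.2.2.1) * C p.2.2.2 q.2.2.2

/-- Triple Kronecker product `A ⊗ B ⊗ C` with right-associated index types. -/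
def kr3 {a b c a' b' c' : Type*} (A : Matrix a a' ℂ) (B : Matrix b b' ℂ) (C : Matrix c c' ℂ) :
    Matrix (a × b × c) (a' × b' × c') ℂ :=
  Matrix.of fun p q => A p.1 q.1 * B p.2.1 q.2.1 * C p.2.2 q.2.2

/-- The boomerang matrix `B̆ = Σ_{i,j} e_i ⊗ e_j ⊗ E_{ij} ∈ M_{n³×n}(ℂ)`:
its entry at row `(i, j, k)`, column `ℓ` is `δ_{k i} δ_{ℓ j}`. -/
def boom (n : ℕ) : Matrix (Fin n × Fin n × Fin n) (Fin n) ℂ :=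
  Matrix.of fun p l => if p.2.2 = p.1 ∧ l = p.2.1 then 1 else 0

/-- The commutation (permutation) matrix `Q_{n,r}`, satisfying
`Q_{n,r} (U ⊗ V) Q_{n,r}ᵀ = V ⊗ U` for `U ∈ M_n`, `V ∈ M_r`. -/
def commMat (n r : ℕ) : Matrix (Fin r × Fin n) (Fin n × Fin r) ℂ :=
  Matrix.of fun p q => if p.2 = q.1 ∧ p.1 = q.2 then 1 else 0

/-- `Σ_{i,j} e_i ⊗ e_j ⊗ I_r ⊗ E_{ij}`: its entry at row `(i, j, a, k)`, column `(b, ℓ)`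
is `δ_{k i} δ_{ℓ j} δ_{a b}`. -/
def preBoom (n r : ℕ) : Matrix (Fin n × Fin n × Fin r × Fin n) (Fin r × Fin n) ℂ :=
  Matrix.of fun p q => if p.2.2.2 = p.1 ∧ q.2 = p.2.1 ∧ p.2.2.1 = q.1 then 1 else 0

/-- The ampliated boomerang matrix `B̆_r = (Σ_{i,j} e_i ⊗ e_j ⊗ I_r ⊗ E_{ij}) · Q_{n,r}`. -/
def boomAmp (n r : ℕ) : Matrix (Fin n × Fin n × Fin r × Fin n) (Fin n × Fin r) ℂ :=
  preBoom n r * commMat n r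

/-- `B` is the Moore–Penrose pseudoinverse of `A` (the four Penrose conditions). -/
structure IsMoorePenroseInv {m k : Type*} [Fintype m] [Fintype k]
    (A : Matrix m k ℂ) (B : Matrix k m ℂ) : Prop where
  mul_inv_mul : A * B * A = A
  inv_mul_inv : B * A * B = B
  hermitian_mul_inv : (A * B)ᴴ = A * B
  hermitian_inv_mul : (B * A)ᴴ = B * A

/-!
Writing an eigenvector of `T = Σᵢ conj(X¹ᵢ) ⊗ X²ᵢ` as `vec V`, the eigen-equation reads
`λ V = Σᵢ X²ᵢ V (X¹ᵢ)*`. The right side is the block row `[X²₁V ⋯ X²_dV]` times the adjoint of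
the block row `[X¹₁ ⋯ X¹_d]`; the C*-identity for both factors, together with
`Σᵢ X²ᵢ V V* (X²ᵢ)* ≤ ‖V‖² Σᵢ X²ᵢ(X²ᵢ)*`, gives
`|λ| ≤ ‖Σᵢ X²ᵢ(X²ᵢ)*‖^{1/2} ‖Σᵢ X¹ᵢ(X¹ᵢ)*‖^{1/2}`.
-/

open scoped MatrixOrder

lemma CStarAlgebra.norm_sum_mul_mul_star_le {ι A : Type*} [CStarAlgebra A] [PartialOrder A]
    [StarOrderedRing A] {p : A} (hp : 0 ≤ p) (s : Finset ι) (b : ι → A) :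
    ‖∑ i ∈ s, b i * p * star (b i)‖ ≤ ‖p‖ * ‖∑ i ∈ s, b i * star (b i)‖ :=
  calc ‖∑ i ∈ s, b i * p * star (b i)‖ ≤ ‖‖p‖ • ∑ i ∈ s, b i * star (b i)‖ := by
        refine CStarAlgebra.norm_le_norm_of_nonneg_of_le
          (Finset.sum_nonneg fun i _ => star_right_conjugate_nonneg hp _) ?_
        rw [Finset.smul_sum]
        exact Finset.sum_le_sum fun i _ => CStarAlgebra.star_right_conjugate_le_norm_smul
    _ = ‖p‖ * ‖∑ i ∈ s, b i * star (b i)‖ := by rw [norm_smul, norm_norm]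

namespace Matrix

variable {ι l m n : Type*}

def blockRow {R : Type*} (M : ι → Matrix m n R) : Matrix m (ι × n) R :=
  of fun i p => M p.1 i p.2

theorem blockRow_mul_conjTranspose_blockRow [Fintype ι] [Fintype n] (M : ι → Matrix m n ℂ)
    (N : ι → Matrix l n ℂ) :
    blockRow M * (blockRow N)ᴴ = ∑ i, M i * (N i)ᴴ := by
  ext a b
  simp [blockRow, mul_apply, sum_apply, Fintype.sum_prod_type]

variable [Fintype ι] [Fintype l] [Fintype m] [Fintype n] [DecidableEq l] [DecidableEq m]
  [DecidableEq n]

theorem l2_opNorm_self_mul_conjTranspose (A : Matrix m n ℂ) : ‖A * Aᴴ‖ = ‖A‖ * ‖A‖ := by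
  simpa [l2_opNorm_conjTranspose] using l2_opNorm_conjTranspose_mul_self Aᴴ

theorem l2_opNorm_blockRow [DecidableEq ι] (M : ι → Matrix m n ℂ) :
    ‖blockRow M‖ = √‖∑ i, M i * (M i)ᴴ‖ := by
  rw [← blockRow_mul_conjTranspose_blockRow, l2_opNorm_self_mul_conjTranspose,
    Real.sqrt_mul_self (norm_nonneg _)]

theorem l2_opNorm_sum_mul_mul_conjTranspose_le [DecidableEq ι] (B : ι → Matrix m m ℂ)
    (V : Matrix m n ℂ) (A : ι → Matrix l n ℂ) :
    ‖∑ i, B i * V * (A i)ᴴ‖ ≤ √‖∑ i, B i * (B i)ᴴ‖ * ‖V‖ * √‖∑ i, A i * (A i)ᴴ‖ := by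
  have hrow : ‖∑ i, (B i * V) * (B i * V)ᴴ‖ ≤ ‖V‖ ^ 2 * ‖∑ i, B i * (B i)ᴴ‖ := by
    simp only [conjTranspose_mul, ← Matrix.mul_assoc]
    simp only [Matrix.mul_assoc _ V]
    have := CStarAlgebra.norm_sum_mul_mul_star_le (posSemidef_self_mul_conjTranspose V).nonneg
      Finset.univ B
    rwa [l2_opNorm_self_mul_conjTranspose, ← sq] at this
  calc ‖∑ i, B i * V * (A i)ᴴ‖ = ‖blockRow (fun i => B i * V) * (blockRow A)ᴴ‖ := by
        rw [blockRow_mul_conjTranspose_blockRow]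
    _ ≤ ‖blockRow (fun i => B i * V)‖ * ‖blockRow A‖ := by
        simpa only [l2_opNorm_conjTranspose] using
          l2_opNorm_mul (blockRow fun i => B i * V) (blockRow A)ᴴ
    _ ≤ √(‖V‖ ^ 2 * ‖∑ i, B i * (B i)ᴴ‖) * √‖∑ i, A i * (A i)ᴴ‖ := by
        rw [l2_opNorm_blockRow, l2_opNorm_blockRow]
        gcongr
    _ = √‖∑ i, B i * (B i)ᴴ‖ * ‖V‖ * √‖∑ i, A i * (A i)ᴴ‖ := by
        rw [Real.sqrt_mul (sq_nonneg _), Real.sqrt_sq (norm_nonneg _), mul_comm ‖V‖]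

theorem spectralRadius_le_of_forall_mulVec_eq_smul (M : Matrix n n ℂ) (r : ℝ)
    (h : ∀ (μ : ℂ) (v : n → ℂ), v ≠ 0 → M *ᵥ v = μ • v → ‖μ‖ ≤ r) :
    spectralRadius ℂ M ≤ ENNReal.ofReal r := by
  refine iSup₂_le fun μ hμ => ?_
  rw [← spectrum_toLin', ← Module.End.hasEigenvalue_iff_mem_spectrum] at hμ
  obtain ⟨v, hv⟩ := hμ.exists_hasEigenvector
  rw [← enorm_eq_nnnorm, ← ofReal_norm]
  exact ENNReal.ofReal_le_ofReal (h μ v hv.2 (by rw [← toLin'_apply]; exact hv.apply_eq_smul))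

end Matrix

theorem conjM_kronecker_mulVec_vec {l m n p : Type*} [Fintype m] [Fintype n]
    (A : Matrix p n ℂ) (B : Matrix l m ℂ) (V : Matrix m n ℂ) :
    (conjM A ⊗ₖ B) *ᵥ vec V = vec (B * V * Aᴴ) := by
  rw [kronecker_mulVec_vec]
  rfl

theorem norm_le_of_sum_conjM_kronecker_mulVec_eq_smul {ι m n : Type*} [Fintype ι] [DecidableEq ι]
    [Fintype m] [DecidableEq m] [Fintype n] [DecidableEq n]
    (A : ι → Matrix m m ℂ) (B : ι → Matrix n n ℂ) {μ : ℂ} {v : m × n → ℂ} (hv : v ≠ 0)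
    (h : (∑ i, conjM (A i) ⊗ₖ B i) *ᵥ v = μ • v) :
    ‖μ‖ ≤ √‖∑ i, B i * (B i)ᴴ‖ * √‖∑ i, A i * (A i)ᴴ‖ := by
  set V : Matrix n m ℂ := of fun k i => v (i, k)
  have hvV : vec V = v := rfl
  have hV : 0 < ‖V‖ := norm_pos_iff.2 fun h0 => hv (by rw [← hvV, h0, vec_zero])
  have heq : ∑ i, B i * V * (A i)ᴴ = μ • V := by
    rw [← vec_inj, vec_sum, vec_smul, hvV, ← h, ← hvV, sum_mulVec]
    simp only [conjM_kronecker_mulVec_vec]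
  refine le_of_mul_le_mul_right ?_ hV
  calc ‖μ‖ * ‖V‖ = ‖∑ i, B i * V * (A i)ᴴ‖ := by rw [heq, norm_smul]
    _ ≤ √‖∑ i, B i * (B i)ᴴ‖ * ‖V‖ * √‖∑ i, A i * (A i)ᴴ‖ :=
        l2_opNorm_sum_mul_mul_conjTranspose_le B V A
    _ = √‖∑ i, B i * (B i)ᴴ‖ * √‖∑ i, A i * (A i)ᴴ‖ * ‖V‖ := by ring

theorem spectralRadius_mixed_lt_one_general {n₁ n₂ d : ℕ}
    (X1 : Fin d → Mat n₁) (X2 : Fin d → Mat n₂)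
    (h1 : StrictRowContraction X1)
    (h2 : ∑ i, X2 i * (X2 i)ᴴ = (1 : Mat n₂)) :
    spectralRadius ℂ (∑ i, conjM (X1 i) ⊗ₖ X2 i) < 1 := by
  have hone : ‖(1 : Mat n₂)‖ ≤ 1 := by
    rcases subsingleton_or_nontrivial (Mat n₂) with _ | _
    · simp [Subsingleton.elim (1 : Mat n₂) 0]
    · exact CStarRing.norm_one.le
  have hbound : √‖∑ i, X2 i * (X2 i)ᴴ‖ * √‖∑ i, X1 i * (X1 i)ᴴ‖ < 1 := by
    rw [h2]
    calc √‖(1 : Mat n₂)‖ * √‖∑ i, X1 i * (X1 i)ᴴ‖ ≤ 1 * √‖∑ i, X1 i * (X1 i)ᴴ‖ := by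
          gcongr
          exact Real.sqrt_le_one.2 hone
      _ < 1 := by rw [one_mul, Real.sqrt_lt' one_pos, one_pow]; exact h1
  calc spectralRadius ℂ (∑ i, conjM (X1 i) ⊗ₖ X2 i)
      ≤ ENNReal.ofReal (√‖∑ i, X2 i * (X2 i)ᴴ‖ * √‖∑ i, X1 i * (X1 i)ᴴ‖) :=
        spectralRadius_le_of_forall_mulVec_eq_smul _ _ fun _ _ hv h =>
          norm_le_of_sum_conjM_kronecker_mulVec_eq_smul X1 X2 hv h
    _ < 1 := ENNReal.ofReal_lt_one.2 hbound

/-- If `X¹` is a strict row contraction of `n₁×n₁` matrices and `X²` is a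
row co-isometry of `n₂×n₂` matrices generating all of `M_{n₂}(ℂ)` as a unital algebra, then
the spectral radius of `T = Σᵢ conj(X¹ᵢ) ⊗ X²ᵢ` is strictly less than `1`. -/
theorem spectralRadius_mixed_lt_one {n₁ n₂ d : ℕ}
    (X1 : Fin d → Mat n₁) (X2 : Fin d → Mat n₂)
    (h1 : StrictRowContraction X1)
    (h2 : ∑ i, X2 i * (X2 i)ᴴ = (1 : Mat n₂))
    (halg : Algebra.adjoin ℂ (Set.range X2) = ⊤) :
    spectralRadius ℂ (∑ i, conjM (X1 i) ⊗ₖ X2 i) < 1 :=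
  spectralRadius_mixed_lt_one_general X1 X2 h1 h2
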